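/- Suppose U_a, U_b ∈ ℝ^{m×k} are two matrices with orthonormal columns. Let P ∈ ℝ^{m×m} be any orthogonal projection matrix, and let P_a^⊥ = I_m − U_a U_aᵀ. Then σ_min(P U_b) ≥ σ_min(P U_a) · σ_min(U_aᵀ U_b) − σ_max(P_a^⊥ U_b). -/

import Mathlib

open MeasureTheory ProbabilityTheory Filter Matrix
open scoped RealInnerProductSpace ENNReal NNReal Topology

noncomputable section

/-- The uniform probability measure on the centered sphere of radius `r` in `ℝ^d`:
the normalized `(d-1)`-dimensional Hausdorff measure on the sphere. -/
def sphereUniform (d : ℕ) (r : ℝ) : Measure (EuclideanSpace ℝ (Fin d)) :=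
  (μH[(d : ℝ) - 1] (Metric.sphere (0 : EuclideanSpace ℝ (Fin d)) r))⁻¹ •
    (μH[(d : ℝ) - 1]).restrict (Metric.sphere (0 : EuclideanSpace ℝ (Fin d)) r)

/-- Euclidean norm of a finite real vector. -/
def eNorm {ι : Type*} [Fintype ι] (v : ι → ℝ) : ℝ := Real.sqrt (∑ i, v i ^ 2)

/-- `ℓ²`-operator norm of a real matrix. -/
def opNorm {ι κ : Type*} [Fintype ι] [Fintype κ] (M : Matrix ι κ ℝ) : ℝ :=
  sSup {r | ∃ v : κ → ℝ, eNorm v ≤ 1 ∧ r = eNorm (M.mulVec v)}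

/-- Smallest eigenvalue of a symmetric matrix (infimum of the Rayleigh quotient). -/
def lambdaMin {ι : Type*} [Fintype ι] (M : Matrix ι ι ℝ) : ℝ :=
  sInf {r | ∃ v : ι → ℝ, eNorm v = 1 ∧ r = v ⬝ᵥ M.mulVec v}

/-- Smallest singular value (as `inf_{‖v‖=1} ‖Mv‖`, appropriate for tall matrices). -/
def sMin {ι κ : Type*} [Fintype ι] [Fintype κ] (M : Matrix ι κ ℝ) : ℝ :=
  sInf {r | ∃ v : κ → ℝ, eNorm v = 1 ∧ r = eNorm (M.mulVec v)}

/-- Orthonormalized probabilists' Hermite polynomial `h_k`. -/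
def hermiteFn (k : ℕ) (x : ℝ) : ℝ :=
  Polynomial.aeval x (Polynomial.hermite k) / Real.sqrt (Nat.factorial k)

/-- Hermite coefficient `μ_k(g) = E[g(G) h_k(G)]` for `G ~ N(0,1)`. -/
def hermiteCoeff (g : ℝ → ℝ) (k : ℕ) : ℝ :=
  ∫ x, g x * hermiteFn k x ∂(gaussianReal 0 1)

/-- `v(σ) := Σ_{k ≥ ℓ} μ_k(σ')²`. -/
def vSigma (ℓ : ℕ) (g : ℝ → ℝ) : ℝ := ∑' k : ℕ, hermiteCoeff g (ℓ + k) ^ 2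

/-- Polynomial growth: `|g(x)| ≤ B (1 + |x|)^B`. -/
def PolyGrowth (B : ℝ) (g : ℝ → ℝ) : Prop := ∀ x : ℝ, |g x| ≤ B * (1 + |x|) ^ B

/-- `g` is a weak derivative of `f`. -/
def IsWeakDeriv (f g : ℝ → ℝ) : Prop :=
  ∀ φ : ℝ → ℝ, ContDiff ℝ (⊤ : ℕ∞) φ → HasCompactSupport φ →
    ∫ x, f x * deriv φ x = - ∫ x, g x * φ x

/-- Assumption on the relative sizes of `n` and `d`. -/
def AssumpND (ℓ : ℕ) (c₀ C₀ : ℝ) (d n : ℕ) : Prop :=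
  if ℓ = 1 then
    c₀ * (d : ℝ) ≤ (n : ℝ) ∧ (n : ℝ) ≤ (d : ℝ) ^ 2 / Real.log d ^ C₀
  else
    (d : ℝ) ^ ℓ * Real.log d ^ C₀ ≤ (n : ℝ) ∧
      (n : ℝ) ≤ (d : ℝ) ^ (ℓ + 1) / Real.log d ^ C₀

/-- Finite-width neural tangent kernel. -/
def ntKernel (σ' : ℝ → ℝ) {d N : ℕ} (ws : Fin N → EuclideanSpace ℝ (Fin d))
    (x y : EuclideanSpace ℝ (Fin d)) : ℝ :=
  (∑ k, σ' ⟪x, ws k⟫ * σ' ⟪y, ws k⟫) * ⟪x, y⟫ / ((N : ℝ) * (d : ℝ))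

/-- Empirical neural tangent kernel matrix `K_N`. -/
def ntKernelMatrix (σ' : ℝ → ℝ) {d n N : ℕ} (xs : Fin n → EuclideanSpace ℝ (Fin d))
    (ws : Fin N → EuclideanSpace ℝ (Fin d)) : Matrix (Fin n) (Fin n) ℝ :=
  Matrix.of fun i j => ntKernel σ' ws (xs i) (xs j)

/-- Infinite-width neural tangent kernel. -/
def infKernel (σ' : ℝ → ℝ) (d : ℕ) (x y : EuclideanSpace ℝ (Fin d)) : ℝ :=
  (∫ w, σ' ⟪x, w⟫ * σ' ⟪y, w⟫ ∂sphereUniform d 1) * ⟪x, y⟫ / (d : ℝ)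

/-- Infinite-width kernel matrix `K`. -/
def infKernelMatrix (σ' : ℝ → ℝ) {d n : ℕ} (xs : Fin n → EuclideanSpace ℝ (Fin d)) :
    Matrix (Fin n) (Fin n) ℝ :=
  Matrix.of fun i j => infKernel σ' d (xs i) (xs j)

/-- NT featurization matrix `Φ ∈ ℝ^{n × Nd}`. -/
def featureMatrix (σ' : ℝ → ℝ) {d n N : ℕ} (xs : Fin n → EuclideanSpace ℝ (Fin d))
    (ws : Fin N → EuclideanSpace ℝ (Fin d)) : Matrix (Fin n) (Fin N × Fin d) ℝ :=
  Matrix.of fun i p => (1 / Real.sqrt ((N : ℝ) * (d : ℝ))) * σ' ⟪xs i, ws p.1⟫ * xs i p.2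

/-- Data matrix with rows `xᵢᵀ`. -/
def XmatOf {d n : ℕ} (xs : Fin n → EuclideanSpace ℝ (Fin d)) : Matrix (Fin n) (Fin d) ℝ :=
  Matrix.of fun i j => xs i j

open Classical in
/-- Inverse square root of a positive semidefinite matrix. -/
def invSqrt {n : ℕ} (M : Matrix (Fin n) (Fin n) ℝ) : Matrix (Fin n) (Fin n) ℝ :=
  if h : M.PosSemidef then
    (h.1.eigenvectorUnitary.1 * diagonal ((↑) ∘ (√·) ∘ h.1.eigenvalues) *
      (star h.1.eigenvectorUnitary : Matrix (Fin n) (Fin n) ℝ))⁻¹ else 0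

/-- First coordinate of a Euclidean vector. -/
def coord0 {d : ℕ} (x : EuclideanSpace ℝ (Fin d)) : ℝ := if h : 0 < d then x ⟨0, h⟩ else 0

/-- The law of `√d ⟨x, e₁⟩` for `x` uniform on the sphere of radius `√d`. -/
def gegMeasure (d : ℕ) : Measure ℝ :=
  Measure.map (fun x : EuclideanSpace ℝ (Fin d) => Real.sqrt d * coord0 x)
    (sphereUniform d (Real.sqrt d))

/-- `Q` is the degree-`k` Gegenbauer polynomial in dimension `d`. -/
def IsGegenbauer (d k : ℕ) (Q : Polynomial ℝ) : Prop :=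
  Q.natDegree = k ∧ Q.eval (d : ℝ) = 1 ∧
    ∀ R : Polynomial ℝ, R.natDegree < k → ∫ t, Q.eval t * R.eval t ∂gegMeasure d = 0

/-- Normalizing constant `B(d,k) = 1/E[Q_k(√d⟨x,e₁⟩)²]`. -/
def gegNormConst (d : ℕ) (Q : Polynomial ℝ) : ℝ := (∫ t, Q.eval t ^ 2 ∂gegMeasure d)⁻¹

/-- Gegenbauer coefficient `λ_{d,k}(g) = E[g(⟨x,e₁⟩) Q_k(√d⟨x,e₁⟩)]`. -/
def gegCoeff (d : ℕ) (g : ℝ → ℝ) (Q : Polynomial ℝ) : ℝ :=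
  ∫ t, g (t / Real.sqrt d) * Q.eval t ∂gegMeasure d

/-- Gegenbauer coefficients `γ_k` of the infinite-width kernel. -/
def gammaCoeff (d : ℕ) (σ' : ℝ → ℝ) (Qf : ℕ → Polynomial ℝ) : ℕ → ℝ
  | 0 => gegCoeff d σ' (Qf 1) ^ 2
  | k + 1 =>
      (((k : ℝ) + 2) / (2 * ((k : ℝ) + 1) + d)) * gegNormConst d (Qf (k + 2)) *
          gegCoeff d σ' (Qf (k + 2)) ^ 2 +
        (((k : ℝ) + 1 + (d : ℝ) - 3) / (2 * ((k : ℝ) + 1) + (d : ℝ) - 4)) *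
          gegNormConst d (Qf k) * gegCoeff d σ' (Qf k) ^ 2

/-- Tail sum `γ_{>ℓ} = Σ_{k > ℓ} γ_k`. -/
def gammaTail (d ℓ : ℕ) (σ' : ℝ → ℝ) (Qf : ℕ → Polynomial ℝ) : ℝ :=
  ∑' k : ℕ, gammaCoeff d σ' Qf (ℓ + 1 + k)

/-- Truncated (degree-`ℓ`) polynomial kernel `K^p`. -/
def polyKernel (d : ℕ) (σ' : ℝ → ℝ) (Qf : ℕ → Polynomial ℝ) (ℓ : ℕ)
    (x y : EuclideanSpace ℝ (Fin d)) : ℝ :=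
  ∑ k ∈ Finset.range (ℓ + 1), gammaCoeff d σ' Qf k * (Qf k).eval ⟪x, y⟫

/-- Kernel matrix of a kernel function on the data. -/
def kernelMatrix {d n : ℕ} (Kf : EuclideanSpace ℝ (Fin d) → EuclideanSpace ℝ (Fin d) → ℝ)
    (xs : Fin n → EuclideanSpace ℝ (Fin d)) : Matrix (Fin n) (Fin n) ℝ :=
  Matrix.of fun i j => Kf (xs i) (xs j)

/-- Kernel evaluation vector `K(·,x₀)`. -/
def kernelVec {d n : ℕ} (Kf : EuclideanSpace ℝ (Fin d) → EuclideanSpace ℝ (Fin d) → ℝ)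
    (xs : Fin n → EuclideanSpace ℝ (Fin d)) (x₀ : EuclideanSpace ℝ (Fin d)) : Fin n → ℝ :=
  fun i => Kf (xs i) x₀

/-- Ridge resolventM `(γ I + K)⁻¹`. -/
def resolventM {d n : ℕ} (Kf : EuclideanSpace ℝ (Fin d) → EuclideanSpace ℝ (Fin d) → ℝ)
    (xs : Fin n → EuclideanSpace ℝ (Fin d)) (γ : ℝ) : Matrix (Fin n) (Fin n) ℝ :=
  (γ • (1 : Matrix (Fin n) (Fin n) ℝ) + kernelMatrix Kf xs)⁻¹

/-- Test error of kernel ridge regression with kernel `Kf` and ridge parameter `γ`. -/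
def krrRisk {d n : ℕ} (f : EuclideanSpace ℝ (Fin d) → ℝ)
    (Kf : EuclideanSpace ℝ (Fin d) → EuclideanSpace ℝ (Fin d) → ℝ)
    (xs : Fin n → EuclideanSpace ℝ (Fin d)) (y : Fin n → ℝ) (γ : ℝ) : ℝ :=
  ∫ x₀, (f x₀ - kernelVec Kf xs x₀ ⬝ᵥ (resolventM Kf xs γ).mulVec y) ^ 2
    ∂sphereUniform d (Real.sqrt d)

/-- Bias term of the generalization-error decomposition. -/
def EBias {d n : ℕ} (f : EuclideanSpace ℝ (Fin d) → ℝ)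
    (Kf : EuclideanSpace ℝ (Fin d) → EuclideanSpace ℝ (Fin d) → ℝ)
    (xs : Fin n → EuclideanSpace ℝ (Fin d)) (γ : ℝ) : ℝ :=
  ∫ x₀, (f x₀ - kernelVec Kf xs x₀ ⬝ᵥ (resolventM Kf xs γ).mulVec fun i => f (xs i)) ^ 2
    ∂sphereUniform d (Real.sqrt d)

/-- Second-moment kernel matrix `E_{x₀}[K(·,x₀)K(·,x₀)ᵀ]`. -/
def kernelSq {d n : ℕ} (Kf : EuclideanSpace ℝ (Fin d) → EuclideanSpace ℝ (Fin d) → ℝ)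
    (xs : Fin n → EuclideanSpace ℝ (Fin d)) : Matrix (Fin n) (Fin n) ℝ :=
  Matrix.of fun i j => ∫ x₀, Kf (xs i) x₀ * Kf (xs j) x₀ ∂sphereUniform d (Real.sqrt d)

/-- Variance term of the generalization-error decomposition. -/
def EVar {d n : ℕ} (Kf : EuclideanSpace ℝ (Fin d) → EuclideanSpace ℝ (Fin d) → ℝ)
    (xs : Fin n → EuclideanSpace ℝ (Fin d)) (γ : ℝ) (ε : Fin n → ℝ) : ℝ :=
  ε ⬝ᵥ (resolventM Kf xs γ * kernelSq Kf xs * resolventM Kf xs γ).mulVec ε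

/-- Cross term of the generalization-error decomposition. -/
def ECross {d n : ℕ} (f : EuclideanSpace ℝ (Fin d) → ℝ)
    (Kf : EuclideanSpace ℝ (Fin d) → EuclideanSpace ℝ (Fin d) → ℝ)
    (xs : Fin n → EuclideanSpace ℝ (Fin d)) (γ : ℝ) (ε : Fin n → ℝ) : ℝ :=
  ε ⬝ᵥ (resolventM Kf xs γ).mulVec fun i =>
    ∫ x₀, Kf (xs i) x₀ *
        (f x₀ - kernelVec Kf xs x₀ ⬝ᵥ (resolventM Kf xs γ).mulVec fun j => f (xs j))
      ∂sphereUniform d (Real.sqrt d)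

/-- Ridge regression estimator over linear features. -/
def ridgeBeta {d n : ℕ} (xs : Fin n → EuclideanSpace ℝ (Fin d)) (y : Fin n → ℝ) (γ : ℝ) :
    Fin d → ℝ :=
  ((XmatOf xs)ᵀ * XmatOf xs + (γ * (d : ℝ)) • (1 : Matrix (Fin d) (Fin d) ℝ))⁻¹.mulVec
    ((XmatOf xs)ᵀ.mulVec y)

/-- Test error of ridge regression over linear features. -/
def RlinRisk {d n : ℕ} (β : EuclideanSpace ℝ (Fin d)) (xs : Fin n → EuclideanSpace ℝ (Fin d))
    (y : Fin n → ℝ) (γ : ℝ) : ℝ :=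
  ∫ x₀, (⟪β, x₀⟫ - ridgeBeta xs y γ ⬝ᵥ fun j => x₀ j) ^ 2 ∂sphereUniform d (Real.sqrt d)

/-- The Rademacher (uniform `±1`) law on `ℝ`. -/
def rademacher : Measure ℝ := ((1 : ℝ≥0∞) / 2) • (Measure.dirac (-1) + Measure.dirac 1)

/-- Second-layer signs `b_k`. -/
def signCoeff {N : ℕ} (k : Fin N ⊕ Fin N) : ℝ := Sum.elim (fun _ => (1 : ℝ)) (fun _ => -1) k

/-- Two-layer network with fixed `±1` second layer and scale `α`. -/
def fNN (σ : ℝ → ℝ) (α : ℝ) {d N : ℕ}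
    (Wt : EuclideanSpace ℝ ((Fin N ⊕ Fin N) × Fin d)) (x : EuclideanSpace ℝ (Fin d)) : ℝ :=
  (α / Real.sqrt N) * ∑ k : Fin N ⊕ Fin N, signCoeff k * σ (∑ j, Wt (k, j) * x j)

/-- Empirical risk of the two-layer network. -/
def empRisk (σ : ℝ → ℝ) (α : ℝ) {d N n : ℕ} (xs : Fin n → EuclideanSpace ℝ (Fin d))
    (y : Fin n → ℝ) (Wt : EuclideanSpace ℝ ((Fin N ⊕ Fin N) × Fin d)) : ℝ :=
  (1 / (n : ℝ)) * ∑ i, (y i - fNN σ α Wt (xs i)) ^ 2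

/-- Symmetric initialization `w̃_k⁰ = w̃_{N+k}⁰ = w_k`. -/
def initW {d N : ℕ} (ws : Fin N → EuclideanSpace ℝ (Fin d)) :
    EuclideanSpace ℝ ((Fin N ⊕ Fin N) × Fin d) :=
  (WithLp.equiv 2 (((Fin N ⊕ Fin N) × Fin d) → ℝ)).symm
    fun p => ws (Sum.elim id id p.1) p.2

/-- Neural tangent model `f_NT(x; a, W)`. -/
def fNT (σ' : ℝ → ℝ) {d N : ℕ} (ws : Fin N → EuclideanSpace ℝ (Fin d))
    (a : Fin N × Fin d → ℝ) (x : EuclideanSpace ℝ (Fin d)) : ℝ :=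
  (1 / Real.sqrt N) * ∑ k, (∑ j, a (k, j) * x j) * σ' ⟪x, ws k⟫

/-- Subgaussian law with constant `C`. -/
def IsSubgaussianLaw (C : ℝ) (ν : Measure ℝ) : Prop :=
  ∀ t : ℝ, ∫ x, Real.exp (t * x) ∂ν ≤ Real.exp (C * t ^ 2)

/-- `Ψ = [1ₙ, X]`. -/
def PsiMat {d n : ℕ} (X : Fin n → EuclideanSpace ℝ (Fin d)) :
    Matrix (Fin n) (Fin (d + 1)) ℝ :=
  Matrix.of fun i j => Fin.cases (motive := fun _ => ℝ) 1 (fun j' => X i j') j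

/-- The grid `{j/M : j ∈ ℤ}`. -/
def Dgrid (M : ℕ) : Set ℝ := {x | ∃ j : ℤ, x = (j : ℝ) / (M : ℝ)}

/-- The kernel `H₁`. -/
def H1fun (σ' : ℝ → ℝ) (d : ℕ) (g : EuclideanSpace ℝ (Fin d) → ℝ)
    (x x' : EuclideanSpace ℝ (Fin d)) : ℝ :=
  ∫ w, (∫ z₁, (∫ z₂,
        σ' ⟪x, w⟫ * σ' ⟪z₁, w⟫ * σ' ⟪x', w⟫ * σ' ⟪z₂, w⟫ *
          (⟪x, z₁⟫ / (d : ℝ)) * (⟪x', z₂⟫ / (d : ℝ)) * g z₁ * g z₂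
      ∂sphereUniform d (Real.sqrt d)) ∂sphereUniform d (Real.sqrt d)) ∂sphereUniform d 1

/-- The kernel `H₃`. -/
def H3fun (σ' : ℝ → ℝ) (d : ℕ) (x x' : EuclideanSpace ℝ (Fin d)) : ℝ :=
  ∫ w, (∫ z,
        σ' ⟪x, w⟫ * σ' ⟪x', w⟫ * σ' ⟪z, w⟫ ^ 2 *
          (⟪x, z⟫ / (d : ℝ)) * (⟪x', z⟫ / (d : ℝ))
      ∂sphereUniform d (Real.sqrt d)) ∂sphereUniform d 1

/-! For a unit vector `v`, put `u = Uaᵀ Ub v`. Then `P Ua u = P Ub v - P (I - Ua Uaᵀ) Ub v`.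
The left side has norm at least `σ_min(P Ua) ‖u‖ ≥ σ_min(P Ua) σ_min(Uaᵀ Ub)`, and since an
orthogonal projection does not increase norms, the subtracted term has norm at most
`σ_max((I - Ua Uaᵀ) Ub)`. -/

section EuclideanNorm

variable {ι : Type*} [Fintype ι]

lemma eNorm_eq_norm_toLp (v : ι → ℝ) : eNorm v = ‖WithLp.toLp 2 v‖ := by
  simp [eNorm, EuclideanSpace.norm_eq]

lemma eNorm_nonneg (v : ι → ℝ) : 0 ≤ eNorm v := Real.sqrt_nonneg _

lemma eNorm_smul (c : ℝ) (v : ι → ℝ) : eNorm (c • v) = |c| * eNorm v := by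
  rw [eNorm_eq_norm_toLp, WithLp.toLp_smul, norm_smul, Real.norm_eq_abs, ← eNorm_eq_norm_toLp]

lemma eNorm_sub_le (v w : ι → ℝ) : eNorm (v - w) ≤ eNorm v + eNorm w := by
  simpa only [eNorm_eq_norm_toLp, WithLp.toLp_sub] using norm_sub_le _ _

lemma eNorm_single [DecidableEq ι] (i : ι) : eNorm (Pi.single i 1) = 1 := by
  rw [eNorm_eq_norm_toLp, PiLp.toLp_single, PiLp.norm_single, norm_one]

lemma eNorm_projection_mulVec_le (P : Matrix ι ι ℝ) (hP : Pᵀ = P) (hPP : P * P = P)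
    (w : ι → ℝ) : eNorm (P *ᵥ w) ≤ eNorm w := by
  have hsq : eNorm (P *ᵥ w) ^ 2 ≤ eNorm w * eNorm (P *ᵥ w) := by
    calc eNorm (P *ᵥ w) ^ 2 = (P *ᵥ w) ⬝ᵥ (P *ᵥ w) := by
          rw [eNorm_eq_norm_toLp, ← real_inner_self_eq_norm_sq]; rfl
      _ = (P *ᵥ w) ⬝ᵥ w := by
          rw [dotProduct_mulVec, ← mulVec_transpose, hP, mulVec_mulVec, hPP]
      _ ≤ eNorm w * eNorm (P *ᵥ w) := by
          simpa only [eNorm_eq_norm_toLp, EuclideanSpace.inner_toLp_toLp, star_trivial] using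
            real_inner_le_norm (WithLp.toLp 2 w) (WithLp.toLp 2 (P *ᵥ w))
  nlinarith [eNorm_nonneg w, eNorm_nonneg (P *ᵥ w)]

end EuclideanNorm

section OpNorm

open scoped Matrix.Norms.L2Operator

variable {ι κ : Type*} [Fintype ι] [Fintype κ]

lemma opNorm_bddAbove (M : Matrix ι κ ℝ) :
    BddAbove {r | ∃ v : κ → ℝ, eNorm v ≤ 1 ∧ r = eNorm (M *ᵥ v)} := by
  classical
  refine ⟨‖M‖, ?_⟩
  rintro r ⟨v, hv, rfl⟩
  rw [eNorm_eq_norm_toLp] at hv ⊢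
  calc ‖WithLp.toLp 2 (M *ᵥ v)‖ ≤ ‖M‖ * ‖WithLp.toLp 2 v‖ := M.l2_opNorm_mulVec _
    _ ≤ ‖M‖ := mul_le_of_le_one_right (norm_nonneg M) hv

lemma eNorm_mulVec_le_opNorm (M : Matrix ι κ ℝ) {v : κ → ℝ} (hv : eNorm v ≤ 1) :
    eNorm (M *ᵥ v) ≤ opNorm M :=
  le_csSup (opNorm_bddAbove M) ⟨v, hv, rfl⟩

lemma opNorm_nonneg (M : Matrix ι κ ℝ) : 0 ≤ opNorm M :=
  (eNorm_nonneg _).trans (eNorm_mulVec_le_opNorm M (v := 0) (by simp [eNorm]))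

end OpNorm

section SMin

variable {ι κ : Type*} [Fintype ι] [Fintype κ]

lemma sMin_nonneg (M : Matrix ι κ ℝ) : 0 ≤ sMin M :=
  Real.sInf_nonneg (by rintro r ⟨v, -, rfl⟩; exact eNorm_nonneg _)

lemma sMin_le_eNorm_mulVec (M : Matrix ι κ ℝ) {v : κ → ℝ} (hv : eNorm v = 1) :
    sMin M ≤ eNorm (M *ᵥ v) :=
  csInf_le ⟨0, by rintro r ⟨w, -, rfl⟩; exact eNorm_nonneg _⟩ ⟨v, hv, rfl⟩

lemma sMin_mul_eNorm_le (M : Matrix ι κ ℝ) (v : κ → ℝ) :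
    sMin M * eNorm v ≤ eNorm (M *ᵥ v) := by
  rcases (eNorm_nonneg v).eq_or_lt with hv | hv
  · rw [← hv, mul_zero]; exact eNorm_nonneg _
  have hunit : eNorm ((eNorm v)⁻¹ • v) = 1 := by
    rw [eNorm_smul, abs_inv, abs_of_pos hv, inv_mul_cancel₀ hv.ne']
  have h := sMin_le_eNorm_mulVec M hunit
  rwa [mulVec_smul, eNorm_smul, abs_inv, abs_of_pos hv, inv_mul_eq_div, le_div_iff₀ hv] at h

lemma le_sMin [Nonempty κ] (M : Matrix ι κ ℝ) {c : ℝ}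
    (h : ∀ v : κ → ℝ, eNorm v = 1 → c ≤ eNorm (M *ᵥ v)) : c ≤ sMin M := by
  classical
  obtain ⟨i⟩ := ‹Nonempty κ›
  refine le_csInf ⟨_, Pi.single i 1, eNorm_single i, rfl⟩ ?_
  rintro r ⟨v, hv, rfl⟩
  exact h v hv

lemma sMin_eq_zero_of_isEmpty [IsEmpty κ] (M : Matrix ι κ ℝ) : sMin M = 0 := by
  have hempty : {r | ∃ v : κ → ℝ, eNorm v = 1 ∧ r = eNorm (M *ᵥ v)} = ∅ := by
    ext r
    simp [eNorm]
  rw [sMin, hempty, Real.sInf_empty]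

end SMin

lemma mul_mulVec_transpose_mul_mulVec {ι κ μ : Type*} [Fintype ι] [DecidableEq ι] [Fintype κ]
    [Fintype μ] (P : Matrix ι ι ℝ) (A : Matrix ι κ ℝ) (B : Matrix ι μ ℝ) (v : μ → ℝ) :
    (P * A) *ᵥ ((Aᵀ * B) *ᵥ v) = (P * B) *ᵥ v - P *ᵥ (((1 - A * Aᵀ) * B) *ᵥ v) := by
  simp only [mulVec_mulVec, ← sub_mulVec, Matrix.sub_mul, Matrix.mul_sub, Matrix.one_mul,
    sub_sub_cancel, Matrix.mul_assoc]

theorem smallest_singular_value_projection_general {m k : ℕ}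
    (Ua Ub : Matrix (Fin m) (Fin k) ℝ) (P : Matrix (Fin m) (Fin m) ℝ)
    (hP : Pᵀ = P) (hPP : P * P = P) :
    sMin (P * Ua) * sMin (Uaᵀ * Ub) -
        opNorm (((1 : Matrix (Fin m) (Fin m) ℝ) - Ua * Uaᵀ) * Ub) ≤
      sMin (P * Ub) := by
  rcases isEmpty_or_nonempty (Fin k) with hk | hk
  · rw [sMin_eq_zero_of_isEmpty (P * Ua), sMin_eq_zero_of_isEmpty (P * Ub), zero_mul, zero_sub,
      neg_nonpos]
    exact opNorm_nonneg _
  refine le_sMin _ fun v hv => ?_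
  set Q := ((1 : Matrix (Fin m) (Fin m) ℝ) - Ua * Uaᵀ) * Ub
  have hQ : eNorm (P *ᵥ (Q *ᵥ v)) ≤ opNorm Q :=
    (eNorm_projection_mulVec_le P hP hPP _).trans (eNorm_mulVec_le_opNorm Q hv.le)
  calc sMin (P * Ua) * sMin (Uaᵀ * Ub) - opNorm Q
      ≤ sMin (P * Ua) * eNorm ((Uaᵀ * Ub) *ᵥ v) - eNorm (P *ᵥ (Q *ᵥ v)) := by
        gcongr
        exacts [sMin_nonneg _, sMin_le_eNorm_mulVec _ hv]
    _ ≤ eNorm ((P * Ua) *ᵥ ((Uaᵀ * Ub) *ᵥ v)) - eNorm (P *ᵥ (Q *ᵥ v)) := by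
        gcongr
        exact sMin_mul_eNorm_le _ _
    _ ≤ eNorm ((P * Ub) *ᵥ v) := by
        rw [mul_mulVec_transpose_mul_mulVec]
        linarith [eNorm_sub_le ((P * Ub) *ᵥ v) (P *ᵥ (Q *ᵥ v))]

/-- Lemma 7.8 of the paper: a lower bound on the smallest singular
value of a projected orthonormal frame. -/
theorem smallest_singular_value_projection {m k : ℕ}
    (Ua Ub : Matrix (Fin m) (Fin k) ℝ) (P : Matrix (Fin m) (Fin m) ℝ)
    (hUa : Uaᵀ * Ua = 1) (hUb : Ubᵀ * Ub = 1) (hP : Pᵀ = P) (hPP : P * P = P) :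
    sMin (P * Ua) * sMin (Uaᵀ * Ub) -
        opNorm (((1 : Matrix (Fin m) (Fin m) ℝ) - Ua * Uaᵀ) * Ub) ≤
      sMin (P * Ub) :=
  smallest_singular_value_projection_general Ua Ub P hP hPP

end
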